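/- Let the directive bi-sequence Λ=(Δ,Θ) over the ternary alphabet {0,1,2} satisfy: each of the letters 0,1,2 occurs infinitely many times in Δ, and the set of antimorphisms occurring infinitely many times in Θ consists of exactly two antimorphisms ϑ₁,ϑ₂∈{E₀,E₁,E₂,R}. Then the word u=u(Δ,Θ) is aperiodic. -/

import Mathlib

/-!
Generalized pseudostandard words (de Luca–De Luca) over binary and ternary
alphabets: antimorphisms, pseudopalindromic closure, directive bi-sequences.
-/

namespace GPS

variable {A : Type*} [Inhabited A]

/-- The involutory antimorphism on finite words induced by the letter map `f`:
reverse the word and apply `f` letterwise. -/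
def anti (f : A → A) (w : List A) : List A := (w.map f).reverse

/-- `w` is an `f`-palindrome (a `ϑ`-palindrome for the antimorphism induced by `f`). -/
def IsPal (f : A → A) (w : List A) : Prop := anti f w = w

/-- The `f`-palindromic closure of `w`: a shortest `f`-palindrome having `w` as a
prefix (returns `w` itself in the degenerate case where none exists). -/
noncomputable def closure (f : A → A) (w : List A) : List A := by
  classical
  exact if h : ∃ n : ℕ, ∃ p : List A, p.length = n ∧ w <+: p ∧ IsPal f p then
    Classical.choose (Nat.find_spec h)
  else w

/-- The sequence of pseudopalindromic prefixes `w_n` of the generalized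
pseudostandard word `u(Δ, Θ)`; `prefixes Δ Θ n` is the paper's `w_n`, with
`Δ n = δ_{n+1}` and `Θ n = ϑ_{n+1}` (0-based indexing of the bi-sequence). -/
noncomputable def prefixes (Δ : ℕ → A) (Θ : ℕ → A → A) : ℕ → List A
  | 0 => []
  | n + 1 => closure (Θ n) (prefixes Δ Θ n ++ [Δ n])

/-- The generalized pseudostandard word `u(Δ, Θ)` as an infinite word `ℕ → A`. -/
noncomputable def word (Δ : ℕ → A) (Θ : ℕ → A → A) (k : ℕ) : A :=
  (prefixes Δ Θ (k + 1)).getD k default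

/-- `p` is a (finite) prefix of the infinite word `x`. -/
def IsPref (p : List A) (x : ℕ → A) : Prop := ∀ i < p.length, p.getD i default = x i

/-- `w` is a factor of the infinite word `x`. -/
def IsFactor (w : List A) (x : ℕ → A) : Prop :=
  ∃ i : ℕ, ∀ j < w.length, w.getD j default = x (i + j)

/-- `w` is a left special factor of the infinite word `x`. -/
def LeftSpecial (w : List A) (x : ℕ → A) : Prop :=
  ∃ a b : A, a ≠ b ∧ IsFactor (a :: w) x ∧ IsFactor (b :: w) x

/-- The infinite word `x` is (eventually) periodic, i.e. of the form `z v^ω`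
with `v` nonempty. -/
def Periodic (x : ℕ → A) : Prop :=
  ∃ p : ℕ, 0 < p ∧ ∃ N : ℕ, ∀ n, N ≤ n → x (n + p) = x n

/-- The infinite word `x` is purely periodic with period `q`, i.e. `x = q^ω`. -/
def PurePeriod (q : List A) (x : ℕ → A) : Prop :=
  q ≠ [] ∧ ∀ i : ℕ, x i = q.getD (i % q.length) default

/-- Concatenation of `k` copies of the finite word `l`, i.e. `l^k`. -/
def wpow (l : List A) (k : ℕ) : List A := (List.replicate k l).flatten

/-! ### The binary alphabet `{0,1}` -/

/-- Letter map of the reversal antimorphism `R` over `{0,1}`. -/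
def Rb : Fin 2 → Fin 2 := id

/-- Letter map of the exchange antimorphism `E` over `{0,1}` (`0 ↔ 1`). -/
def Eb : Fin 2 → Fin 2 := fun x => x + 1

/-- A binary directive bi-sequence is normalized if the sequence `(w_n)` contains
every prefix of `u(Δ,Θ)` that is an `R`-palindrome or an `E`-palindrome. -/
def NormalizedB (Δ : ℕ → Fin 2) (Θ : ℕ → Fin 2 → Fin 2) : Prop :=
  ∀ p : List (Fin 2), IsPref p (word Δ Θ) → (IsPal Rb p ∨ IsPal Eb p) →
    ∃ n : ℕ, prefixes Δ Θ n = p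

/-! ### The ternary alphabet `{0,1,2}` -/

/-- Letter map of the reversal antimorphism `R` over `{0,1,2}`. -/
def Rt : Fin 3 → Fin 3 := id

/-- Letter map of the exchange antimorphism `E_i` over `{0,1,2}`: it fixes `i`
and exchanges the other two letters (indeed `-(i+x) = i` iff `x = i` in `Fin 3`). -/
def Et (i : Fin 3) : Fin 3 → Fin 3 := fun x => -(i + x)

/-- A ternary directive bi-sequence is normalized if the sequence `(w_n)` contains
every prefix of `u(Δ,Θ)` that is a `ϑ`-palindrome for some involutory antimorphism `ϑ`. -/
def NormalizedT (Δ : ℕ → Fin 3) (Θ : ℕ → Fin 3 → Fin 3) : Prop :=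
  ∀ p : List (Fin 3), IsPref p (word Δ Θ) → (IsPal Rt p ∨ ∃ i : Fin 3, IsPal (Et i) p) →
    ∃ n : ℕ, prefixes Δ Θ n = p

end GPS

/-!
If `u = u(Δ, Θ)` is eventually periodic, the letter following a long `ϑ`-palindromic prefix
depends only on `ϑ`: reflecting through the palindrome and then shifting by a multiple of the
period carries that position back to a fixed position inside the periodic part. Since `δ_{n+1}`
is exactly the letter following the `ϑ_n`-palindrome `w_n`, eventually the letters of `Δ` are
determined by the antimorphisms of `Θ`, so at most as many letters as antimorphisms occur
infinitely often. Two antimorphisms cannot account for three letters.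
-/

namespace GPS

section Antimorphism

variable {A : Type*}

theorem anti_append (f : A → A) (u v : List A) : anti f (u ++ v) = anti f v ++ anti f u := by
  simp [anti]

theorem anti_anti {f : A → A} (hf : Function.Involutive f) (w : List A) :
    anti f (anti f w) = w := by
  simp [anti, List.map_reverse, hf.comp_self]

theorem isPal_append_anti {f : A → A} (hf : Function.Involutive f) (w : List A) :
    IsPal f (w ++ anti f w) := by
  rw [IsPal, anti_append, anti_anti hf]

theorem closure_spec {f : A → A} (hf : Function.Involutive f) (w : List A) :
    w <+: closure f w ∧ IsPal f (closure f w) := by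
  classical
  have hex : ∃ n : ℕ, ∃ p : List A, p.length = n ∧ w <+: p ∧ IsPal f p :=
    ⟨_, _, rfl, List.prefix_append _ _, isPal_append_anti hf w⟩
  unfold closure
  rw [dif_pos hex]
  exact (Classical.choose_spec (Nat.find_spec hex)).2

theorem IsPal.getElem_eq {f : A → A} {w : List A} (hw : IsPal f w) {j : ℕ}
    (hj : j < w.length) : w[j] = f w[w.length - 1 - j] := by
  have hlen : (anti f w).length = w.length := by simp [anti]
  calc w[j] = (anti f w)[j]'(hlen ▸ hj) := List.getElem_of_eq hw.symm hj
    _ = f w[w.length - 1 - j] := by simp [anti, List.getElem_reverse]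

end Antimorphism

section Prefixes

variable {A : Type*} (Δ : ℕ → A) {Θ : ℕ → A → A}

theorem prefixes_succ_spec (hΘ : ∀ n, Function.Involutive (Θ n)) (n : ℕ) :
    prefixes Δ Θ n ++ [Δ n] <+: prefixes Δ Θ (n + 1) ∧ IsPal (Θ n) (prefixes Δ Θ (n + 1)) :=
  closure_spec (hΘ n) _

theorem prefixes_prefix_prefixes (hΘ : ∀ n, Function.Involutive (Θ n)) {m n : ℕ}
    (hmn : m ≤ n) : prefixes Δ Θ m <+: prefixes Δ Θ n := by
  induction n, hmn using Nat.le_induction with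
  | base => exact List.prefix_refl _
  | succ n _ ih =>
    exact ih.trans ((List.prefix_append _ _).trans (prefixes_succ_spec Δ hΘ n).1)

theorem length_prefixes_lt_succ (hΘ : ∀ n, Function.Involutive (Θ n)) (n : ℕ) :
    (prefixes Δ Θ n).length < (prefixes Δ Θ (n + 1)).length := by
  simpa using (prefixes_succ_spec Δ hΘ n).1.length_le

theorem le_length_prefixes (hΘ : ∀ n, Function.Involutive (Θ n)) (n : ℕ) :
    n ≤ (prefixes Δ Θ n).length := by
  induction n with
  | zero => simp
  | succ n ih => have := length_prefixes_lt_succ Δ hΘ n; omega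

theorem getElem_prefixes [Inhabited A] (hΘ : ∀ n, Function.Involutive (Θ n)) {n k : ℕ}
    (hk : k < (prefixes Δ Θ n).length) : (prefixes Δ Θ n)[k] = word Δ Θ k := by
  have hk' : k < (prefixes Δ Θ (k + 1)).length := le_length_prefixes Δ hΘ (k + 1)
  rw [word, List.getD_eq_getElem _ _ hk']
  rcases le_total n (k + 1) with h | h
  · exact (prefixes_prefix_prefixes Δ hΘ h).getElem hk
  · exact ((prefixes_prefix_prefixes Δ hΘ h).getElem hk').symm

theorem word_length_prefixes [Inhabited A] (hΘ : ∀ n, Function.Involutive (Θ n)) (n : ℕ) :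
    word Δ Θ (prefixes Δ Θ n).length = Δ n := by
  have hstep := (prefixes_succ_spec Δ hΘ n).1
  have hk : (prefixes Δ Θ n).length < (prefixes Δ Θ n ++ [Δ n]).length := by simp
  rw [← getElem_prefixes Δ hΘ (hk.trans_le hstep.length_le), ← hstep.getElem hk]
  simp

theorem word_eq_reflect [Inhabited A] (hΘ : ∀ n, Function.Involutive (Θ n)) (n : ℕ) {j : ℕ}
    (hj : j < (prefixes Δ Θ (n + 1)).length) :
    word Δ Θ j = Θ n (word Δ Θ ((prefixes Δ Θ (n + 1)).length - 1 - j)) := by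
  rw [← getElem_prefixes Δ hΘ hj, ← getElem_prefixes Δ hΘ (n := n + 1) (by omega)]
  exact (prefixes_succ_spec Δ hΘ n).2.getElem_eq hj

end Prefixes

section Periodicity

variable {A : Type*} {x : ℕ → A} {p N : ℕ}

theorem apply_add_mul_eq (hper : ∀ n, N ≤ n → x (n + p) = x n) {n : ℕ} (hn : N ≤ n)
    (k : ℕ) : x (n + p * k) = x n := by
  induction k with
  | zero => simp
  | succ k ih => rw [mul_add_one, ← add_assoc, hper _ (by omega), ih]

/-- `L` and `L'` are congruent modulo `p` to the reflections of the position `p (N + 1) - 1`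
through the two palindromic prefixes; both reflections lie in the periodic part and carry the
letter `f⁻¹ (x (p (N + 1) - 1))`. -/
theorem apply_eq_of_reflect {f : A → A} (hf : Function.Injective f) (hp : 0 < p)
    (hper : ∀ n, N ≤ n → x (n + p) = x n) {L L' : ℕ}
    (hL : p * (N + 1) + N ≤ L) (hL' : p * (N + 1) + N ≤ L')
    (hrefl : ∀ j < L, x j = f (x (L - 1 - j))) (hrefl' : ∀ j < L', x j = f (x (L' - 1 - j))) :
    x L = x L' := by
  have hK : 1 ≤ p * (N + 1) := Nat.one_le_iff_ne_zero.mpr (by positivity)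
  have hback : ∀ M, p * (N + 1) + N ≤ M → x M = x (M - p * (N + 1)) := fun M hM => by
    rw [← apply_add_mul_eq hper (n := M - p * (N + 1)) (by omega) (N + 1), Nat.sub_add_cancel]
    omega
  have hmid : x (L - p * (N + 1)) = x (L' - p * (N + 1)) := by
    apply hf
    have h := (hrefl (p * (N + 1) - 1) (by omega)).symm.trans (hrefl' _ (by omega))
    rwa [show L - 1 - (p * (N + 1) - 1) = L - p * (N + 1) by omega,
      show L' - 1 - (p * (N + 1) - 1) = L' - p * (N + 1) by omega] at h
  rw [hback L hL, hback L' hL', hmid]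

end Periodicity

section InfinitelyOften

variable {β : Type*}

def infinitelyOften (s : ℕ → β) : Set β := {b | {n | s n = b}.Infinite}

theorem eventually_mem_infinitelyOften {s : ℕ → β} (hs : (Set.range s).Finite) :
    ∀ᶠ n in Filter.atTop, s n ∈ infinitelyOften s := by
  rw [← Nat.cofinite_eq_atTop, Filter.eventually_cofinite]
  refine ((hs.sdiff (t := infinitelyOften s)).preimage' fun b hb => ?_).subset
    fun n hn => ⟨Set.mem_range_self n, hn⟩
  exact Set.not_infinite.mp hb.2

end InfinitelyOften

section Aperiodicity

variable {A : Type*} [Inhabited A] {Δ : ℕ → A} {Θ : ℕ → A → A}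

theorem Periodic.exists_Δ_succ_eq_of_Θ_eq (hΘ : ∀ n, Function.Involutive (Θ n))
    (hu : Periodic (word Δ Θ)) :
    ∃ M, ∀ m n, M ≤ m → M ≤ n → Θ m = Θ n → Δ (m + 1) = Δ (n + 1) := by
  obtain ⟨p, hp, N, hper⟩ := hu
  refine ⟨p * (N + 1) + N, fun m n hm hn hΘmn => ?_⟩
  have hlong : ∀ k, p * (N + 1) + N ≤ k → p * (N + 1) + N ≤ (prefixes Δ Θ (k + 1)).length :=
    fun k hk => hk.trans ((Nat.le_succ k).trans (le_length_prefixes Δ hΘ (k + 1)))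
  rw [← word_length_prefixes Δ hΘ, ← word_length_prefixes Δ hΘ]
  refine apply_eq_of_reflect (hΘ m).injective hp hper (hlong m hm) (hlong n hn)
    (fun j hj => word_eq_reflect Δ hΘ m hj) (fun j hj => ?_)
  rw [hΘmn]
  exact word_eq_reflect Δ hΘ n hj

theorem Periodic.encard_infinitelyOften_le (hΘ : ∀ n, Function.Involutive (Θ n))
    (hrange : (Set.range Θ).Finite) (hu : Periodic (word Δ Θ)) :
    (infinitelyOften Δ).encard ≤ (infinitelyOften Θ).encard := by
  obtain ⟨M, hM⟩ := hu.exists_Δ_succ_eq_of_Θ_eq hΘ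
  obtain ⟨M', hM'⟩ := Filter.eventually_atTop.mp (eventually_mem_infinitelyOften hrange)
  have hidx : ∀ a ∈ infinitelyOften Δ, ∃ n, max M M' ≤ n ∧ Δ (n + 1) = a := fun a ha => by
    obtain ⟨k, hk, hlt⟩ := Set.Infinite.exists_gt ha (max M M')
    exact ⟨k - 1, by omega, by rwa [Nat.sub_add_cancel (by omega)]⟩
  choose! idx hidx using hidx
  refine Set.encard_le_encard_of_injOn (f := fun a => Θ (idx a))
    (fun a ha => hM' _ (le_of_max_le_right (hidx a ha).1)) fun a ha b hb hab => ?_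
  rw [← (hidx a ha).2, ← (hidx b hb).2]
  exact hM _ _ (le_of_max_le_left (hidx a ha).1) (le_of_max_le_left (hidx b hb).1) hab

end Aperiodicity

theorem involutive_Et (i : Fin 3) : Function.Involutive (Et i) := by
  intro x
  revert i x
  decide

theorem range_subset_insert_Rt_range_Et {Θ : ℕ → Fin 3 → Fin 3}
    (hΘ : ∀ n, Θ n = Rt ∨ ∃ i : Fin 3, Θ n = Et i) : Set.range Θ ⊆ insert Rt (Set.range Et) := by
  rintro _ ⟨n, rfl⟩
  rcases hΘ n with h | ⟨i, h⟩
  · exact .inl h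
  · exact .inr ⟨i, h.symm⟩

theorem aperiodic_two_antimorphisms_all_letters_general (Δ : ℕ → Fin 3) (Θ : ℕ → Fin 3 → Fin 3)
    (hΘ : ∀ n, Θ n = Rt ∨ ∃ i : Fin 3, Θ n = Et i)
    (hΔ : ∀ a : Fin 3, {n | Δ n = a}.Infinite)
    (ϑ₁ ϑ₂ : Fin 3 → Fin 3)
    (hexact : ∀ g : Fin 3 → Fin 3, {n | Θ n = g}.Infinite → g = ϑ₁ ∨ g = ϑ₂) :
    ¬ Periodic (word Δ Θ) := by
  intro hu
  have hinv : ∀ n, Function.Involutive (Θ n) := fun n => by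
    rcases hΘ n with h | ⟨i, h⟩ <;> rw [h]
    exacts [fun _ => rfl, involutive_Et i]
  have hrange : (Set.range Θ).Finite :=
    ((Set.finite_range Et).insert Rt).subset (range_subset_insert_Rt_range_Et hΘ)
  have hletters : infinitelyOften Δ = Set.univ := Set.eq_univ_of_forall hΔ
  have hcard : (3 : ℕ∞) ≤ 2 := calc
    (3 : ℕ∞) = (infinitelyOften Δ).encard := by simp [hletters]
    _ ≤ (infinitelyOften Θ).encard := hu.encard_infinitelyOften_le hinv hrange
    _ ≤ ({ϑ₁, ϑ₂} : Set (Fin 3 → Fin 3)).encard := Set.encard_le_encard hexact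
    _ ≤ 2 := (Set.encard_insert_le _ _).trans (by simp [one_add_one_eq_two])
  exact absurd hcard (by decide)

/-- if every letter of `{0,1,2}` occurs infinitely many times in `Δ`
and exactly two antimorphisms occur infinitely many times in `Θ`, then `u(Δ,Θ)`
is aperiodic. -/
theorem aperiodic_two_antimorphisms_all_letters (Δ : ℕ → Fin 3) (Θ : ℕ → Fin 3 → Fin 3)
    (hΘ : ∀ n, Θ n = Rt ∨ ∃ i : Fin 3, Θ n = Et i)
    (hΔ : ∀ a : Fin 3, {n | Δ n = a}.Infinite)
    (ϑ₁ ϑ₂ : Fin 3 → Fin 3)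
    (hϑ₁ : ϑ₁ = Rt ∨ ∃ i : Fin 3, ϑ₁ = Et i) (hϑ₂ : ϑ₂ = Rt ∨ ∃ i : Fin 3, ϑ₂ = Et i)
    (hne : ϑ₁ ≠ ϑ₂)
    (h1 : {n | Θ n = ϑ₁}.Infinite) (h2 : {n | Θ n = ϑ₂}.Infinite)
    (hexact : ∀ g : Fin 3 → Fin 3, {n | Θ n = g}.Infinite → g = ϑ₁ ∨ g = ϑ₂) :
    ¬ Periodic (word Δ Θ) :=
  aperiodic_two_antimorphisms_all_letters_general Δ Θ hΘ hΔ ϑ₁ ϑ₂ hexact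

end GPS
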